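/- Fix an integer k ≥ 1, q ≥ 2, and a real constant c with 0 < c ≤ 1. Suppose P is a hereditary property of families of k-dimensional subspaces of F_q^n such that every family of k-subsets of [n] with property P (under the Boolean-lattice embedding) has size at most c·C(n,k). Then every family of k-dimensional subspaces of F_q^n with property P has size at most c·[n choose k]_q. -/

import Mathlib

/-! Double count the pairs `(b, W)` with `b` an ordered basis of `F^n`, `W ∈ V` and `W` spanned
by a subfamily of `b`. Each basis lies in at most `c·C(n,k)` pairs, by hypothesis. Conversely,
since `GL_n` acts transitively on independent families, the number of ways of completing an
independent `k`-family to a basis does not depend on the family. Hence, for each of the `C(n,k)`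
index sets `S` of size `k`, the bases with `b(S) ⊆ W` form the fraction `1 / [n choose k]_q` of
all bases: the number of independent `k`-families in `W` divided by that in `F^n`. -/

noncomputable def gaussBinom (q n k : ℕ) : ℚ :=
  ∏ i ∈ Finset.range k, ((q : ℚ) ^ (n - i) - 1) / ((q : ℚ) ^ (k - i) - 1)

open Finset Module Submodule

theorem gaussBinom_pos {q n k : ℕ} (hq : 1 < q) (hkn : k ≤ n) : 0 < gaussBinom q n k := by
  refine prod_pos fun i hi => ?_
  have hik := mem_range.1 hi
  have hq' : (1 : ℚ) < q := by exact_mod_cast hq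
  exact div_pos (sub_pos.2 (one_lt_pow₀ hq' (by omega)))
    (sub_pos.2 (one_lt_pow₀ hq' (by omega)))

theorem gaussBinom_eq_div {q n k : ℕ} (hq : 0 < q) (hkn : k ≤ n) :
    gaussBinom q n k =
      ((∏ i ∈ range k, (q ^ n - q ^ i) : ℕ) : ℚ) /
        ((∏ i ∈ range k, (q ^ k - q ^ i) : ℕ) : ℚ) := by
  have hfactor {m i : ℕ} (him : i ≤ m) :
      ((q ^ m - q ^ i : ℕ) : ℚ) = (q : ℚ) ^ i * ((q : ℚ) ^ (m - i) - 1) := by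
    rw [Nat.cast_sub (Nat.pow_le_pow_right hq him), mul_sub, mul_one, ← pow_add,
      Nat.add_sub_cancel' him]
    push_cast
    ring
  rw [Nat.cast_prod, Nat.cast_prod, ← prod_div_distrib, gaussBinom]
  refine prod_congr rfl fun i hi => ?_
  have hik : i < k := mem_range.1 hi
  rw [hfactor (hik.le.trans hkn), hfactor hik.le, mul_div_mul_left _ _ (by positivity)]

section LinearAlgebra

variable {F M ι : Type*} [Field F] [AddCommGroup M] [Module F M]

variable (F) in
/-- The Boolean lattice `G_B` of the paper, for `B` the range of `b`. -/
def subfamilySpans (b : ι → M) : Set (Submodule F M) :=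
  Set.range fun S : Finset ι => span F (b '' S)

namespace LinearIndependent

theorem exists_linearEquiv_apply_eq [FiniteDimensional F M] {g g' : ι → M}
    (hg : LinearIndependent F g) (hg' : LinearIndependent F g') :
    ∃ φ : M ≃ₗ[F] M, ∀ i, φ (g i) = g' i := by
  let b := Basis.sumExtend hg
  let b' := Basis.sumExtend hg'
  have := Module.Finite.finite_basis b
  have := Module.Finite.finite_basis b'
  have := Finite.sum_left (α := ι) (Basis.sumExtendIndex hg)
  have := Finite.sum_right ι (β := Basis.sumExtendIndex hg)
  have := Finite.sum_right ι (β := Basis.sumExtendIndex hg')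
  have hcard : Nat.card (Basis.sumExtendIndex hg) = Nat.card (Basis.sumExtendIndex hg') := by
    have h := (finrank_eq_nat_card_basis b).symm.trans (finrank_eq_nat_card_basis b')
    rw [Nat.card_sum, Nat.card_sum] at h
    omega
  obtain ⟨e⟩ := Finite.card_eq.mp hcard
  refine ⟨b.equiv b' ((Equiv.refl ι).sumCongr e), fun i => ?_⟩
  have hinl {v : ι → M} (hv : LinearIndependent F v) i : Basis.sumExtend hv (.inl i) = v i := by
    simp only [Basis.sumExtend, Basis.reindex_apply, Basis.coe_extend]
    rfl
  rw [← hinl hg, Basis.equiv_apply, Equiv.sumCongr_apply, Sum.map_inl, Equiv.refl_apply, hinl]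

variable {b : ι → M} (hb : LinearIndependent F b)
include hb

theorem finrank_span_image (S : Finset ι) : finrank F (span F (b '' S)) = #S := by
  rw [Set.image_eq_range]
  exact (finrank_span_eq_card (hb.comp _ Subtype.val_injective)).trans (Fintype.card_coe S)

theorem span_image_eq_iff {S : Finset ι} {W : Submodule F M} [FiniteDimensional F W]
    (hW : finrank F W = #S) : span F (b '' S) = W ↔ ∀ i ∈ S, b i ∈ W := by
  refine ⟨fun h i hi => h ▸ subset_span (Set.mem_image_of_mem b hi), fun h => ?_⟩
  refine eq_of_le_of_finrank_le (span_le.2 ?_) (by rw [hb.finrank_span_image, hW])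
  rintro _ ⟨i, hi, rfl⟩
  exact h i hi

theorem span_image_injective : Function.Injective fun S : Set ι => span F (b '' S) := by
  have hsub {S T : Set ι} (h : span F (b '' S) = span F (b '' T)) : S ⊆ T := fun i hi => by
    by_contra hiT
    exact hb.notMem_span_image hiT (h ▸ subset_span (Set.mem_image_of_mem b hi))
  exact fun S T h => (hsub h).antisymm (hsub h.symm)

end LinearIndependent

theorem card_linearIndependent_sumElim_eq [FiniteDimensional F M] {κ : Type*}
    {g g' : ι → M} (hg : LinearIndependent F g) (hg' : LinearIndependent F g') :
    Nat.card {h : κ → M // LinearIndependent F (Sum.elim g h)} =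
      Nat.card {h : κ → M // LinearIndependent F (Sum.elim g' h)} := by
  obtain ⟨φ, hφ⟩ := hg.exists_linearEquiv_apply_eq hg'
  refine Nat.card_congr (Equiv.subtypeEquiv ((Equiv.refl κ).arrowCongr φ.toEquiv) fun h => ?_)
  change _ ↔ LinearIndependent F (Sum.elim g' (φ ∘ h))
  have hcomp : Sum.elim g' (φ ∘ h) = φ.toLinearMap ∘ Sum.elim g h := by
    ext (i | i) <;> simp [hφ]
  rw [hcomp, φ.toLinearMap.linearIndependent_iff φ.ker]

theorem card_linearIndependent_forall_mem (W : Submodule F M) :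
    Nat.card {g : ι → M // LinearIndependent F g ∧ ∀ i, g i ∈ W} =
      Nat.card {g : ι → W // LinearIndependent F g} :=
  Nat.card_congr
    { toFun g := ⟨fun i => ⟨g.1 i, g.2.2 i⟩, .of_comp W.subtype g.2.1⟩
      invFun g := ⟨fun i => g.1 i, g.2.map' W.subtype W.ker_subtype, fun i => (g.1 i).2⟩
      left_inv _ := rfl
      right_inv _ := rfl }

variable [Fintype F] [FiniteDimensional F M]

theorem card_linearIndependent_of_card_le [Fintype ι] (h : Fintype.card ι ≤ finrank F M) :
    Nat.card {g : ι → M // LinearIndependent F g} =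
      ∏ i ∈ range (Fintype.card ι), (Fintype.card F ^ finrank F M - Fintype.card F ^ i) := by
  have := Module.finite_of_finite F (M := M)
  let e := Fintype.equivFin ι
  have he : Nat.card {g : ι → M // LinearIndependent F g} =
      Nat.card {g : Fin (Fintype.card ι) → M // LinearIndependent F g} :=
    Nat.card_congr ((e.arrowCongr (Equiv.refl M)).subtypeEquiv fun g =>
      (linearIndependent_equiv e.symm (f := g)).symm)
  rw [he, card_linearIndependent h,
    Fin.prod_univ_eq_prod_range (fun i => Fintype.card F ^ finrank F M - Fintype.card F ^ i)]

theorem card_linearIndependent_sumElim [Finite ι] {κ : Type*} [Finite κ]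
    (Q : (ι → M) → Prop) (hQ : ∀ g, Q g → LinearIndependent F g)
    {g₀ : ι → M} (hg₀ : LinearIndependent F g₀) :
    Nat.card {p : ι ⊕ κ → M // LinearIndependent F p ∧ Q (p ∘ Sum.inl)} =
      Nat.card {g // Q g} * Nat.card {h : κ → M // LinearIndependent F (Sum.elim g₀ h)} := by
  classical
  have := Module.finite_of_finite F (M := M)
  have := Fintype.ofFinite {g // Q g}
  let split : {p : ι ⊕ κ → M // LinearIndependent F p ∧ Q (p ∘ Sum.inl)} ≃
      Σ g : {g // Q g}, {h : κ → M // LinearIndependent F (Sum.elim g.1 h)} :=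
    { toFun p := ⟨⟨p.1 ∘ Sum.inl, p.2.2⟩, ⟨p.1 ∘ Sum.inr, by simpa using p.2.1⟩⟩
      invFun x := ⟨Sum.elim x.1.1 x.2.1, x.2.2, by simpa using x.1.2⟩
      left_inv p := by simp
      right_inv x := rfl }
  rw [Nat.card_congr split, Nat.card_sigma,
    sum_congr rfl fun g _ => card_linearIndependent_sumElim_eq (hQ g.1 g.2) hg₀,
    sum_const, card_univ, smul_eq_mul, Fintype.card_eq_nat_card]

theorem card_linearIndependent_sumElim_mul [Finite ι] {κ : Type*} [Finite κ]
    (Q : (ι → M) → Prop) (hQ : ∀ g, Q g → LinearIndependent F g) :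
    Nat.card {p : ι ⊕ κ → M // LinearIndependent F p ∧ Q (p ∘ Sum.inl)} *
        Nat.card {g : ι → M // LinearIndependent F g} =
      Nat.card {p : ι ⊕ κ → M // LinearIndependent F p} * Nat.card {g // Q g} := by
  rcases isEmpty_or_nonempty {g : ι → M // LinearIndependent F g} with hempty | ⟨g₀, hg₀⟩
  · have : IsEmpty {g // Q g} := ⟨fun g => hempty.false ⟨g.1, hQ g.1 g.2⟩⟩
    simp
  have hall : Nat.card {p : ι ⊕ κ → M // LinearIndependent F p} =
      Nat.card {p : ι ⊕ κ → M //
        LinearIndependent F p ∧ LinearIndependent F (p ∘ Sum.inl)} :=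
    Nat.card_congr <| Equiv.subtypeEquivRight fun p =>
      (and_iff_left_of_imp fun hp => hp.comp _ Sum.inl_injective).symm
  rw [hall, card_linearIndependent_sumElim Q hQ hg₀,
    card_linearIndependent_sumElim (fun g => LinearIndependent F g) (fun _ => id) hg₀]
  ring

theorem card_linearIndependent_forall_mem_mul [Finite ι] (S : Set ι) (W : Submodule F M) :
    Nat.card {b : ι → M // LinearIndependent F b ∧ ∀ i ∈ S, b i ∈ W} *
        Nat.card {g : S → M // LinearIndependent F g} =
      Nat.card {b : ι → M // LinearIndependent F b} *
        Nat.card {g : S → M // LinearIndependent F g ∧ ∀ i, g i ∈ W} := by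
  classical
  let e : (ι → M) ≃ (S ⊕ ↥Sᶜ → M) :=
    (Equiv.sumCompl (· ∈ S)).symm.arrowCongr (Equiv.refl M)
  have he (b : ι → M) : LinearIndependent F (e b) ↔ LinearIndependent F b :=
    linearIndependent_equiv (Equiv.sumCompl (· ∈ S))
  have hmem : Nat.card {b : ι → M // LinearIndependent F b ∧ ∀ i ∈ S, b i ∈ W} =
      Nat.card {p : S ⊕ ↥Sᶜ → M // LinearIndependent F p ∧
        (LinearIndependent F (p ∘ Sum.inl) ∧ ∀ i, (p ∘ Sum.inl) i ∈ W)} := by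
    refine Nat.card_congr (e.subtypeEquiv fun b => ?_)
    have hinl : e b ∘ Sum.inl = b ∘ Subtype.val := rfl
    rw [he, hinl]
    exact and_congr_right fun hb => by simp [hb.comp _ Subtype.val_injective]
  have hall : Nat.card {b : ι → M // LinearIndependent F b} =
      Nat.card {p : S ⊕ ↥Sᶜ → M // LinearIndependent F p} :=
    Nat.card_congr (e.subtypeEquiv fun b => (he b).symm)
  rw [hmem, hall]
  exact card_linearIndependent_sumElim_mul (fun g => LinearIndependent F g ∧ ∀ i, g i ∈ W)
    fun _ hg => hg.1

theorem card_linearIndependent_mem_subfamilySpans [Fintype ι] (W : Submodule F M) :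
    Nat.card {b : ι → M // LinearIndependent F b ∧ W ∈ subfamilySpans F b} =
      ∑ S ∈ powersetCard (finrank F W) (univ : Finset ι),
        Nat.card {b : ι → M // LinearIndependent F b ∧ ∀ i ∈ (S : Set ι), b i ∈ W} := by
  classical
  have := Module.finite_of_finite F (M := M)
  have := Fintype.ofFinite M
  simp only [Nat.card_eq_fintype_card, Fintype.card_subtype]
  rw [← card_biUnion]
  · congr 1
    ext b
    simp only [subfamilySpans, Set.mem_range, mem_filter, mem_univ, true_and, mem_biUnion,
      mem_powersetCard_univ, Finset.mem_coe]
    constructor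
    · rintro ⟨hb, S, hS⟩
      have hSk : #S = finrank F W := by rw [← hb.finrank_span_image S, hS]
      exact ⟨S, hSk, hb, (hb.span_image_eq_iff hSk.symm).1 hS⟩
    · rintro ⟨S, hSk, hb, hmem⟩
      exact ⟨hb, S, (hb.span_image_eq_iff hSk.symm).2 hmem⟩
  · intro S hS T hT hST
    refine disjoint_left.2 fun b hbS hbT => hST ?_
    simp only [mem_filter, mem_univ, true_and] at hbS hbT
    obtain ⟨hb, hbS⟩ := hbS
    have hSW := (hb.span_image_eq_iff (mem_powersetCard_univ.1 hS).symm).2 hbS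
    have hTW := (hb.span_image_eq_iff (mem_powersetCard_univ.1 hT).symm).2 hbT.2
    exact coe_injective (hb.span_image_injective (hSW.trans hTW.symm))

theorem card_linearIndependent_mem_subfamilySpans_mul_gaussBinom [Fintype ι]
    (W : Submodule F M) :
    (Nat.card {b : ι → M // LinearIndependent F b ∧ W ∈ subfamilySpans F b} : ℚ) *
        gaussBinom (Fintype.card F) (finrank F M) (finrank F W) =
      (Fintype.card ι).choose (finrank F W) *
        Nat.card {b : ι → M // LinearIndependent F b} := by
  set k := finrank F W
  set q := Fintype.card F
  have hterm : ∀ S ∈ powersetCard k (univ : Finset ι),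
      Nat.card {b : ι → M // LinearIndependent F b ∧ ∀ i ∈ (S : Set ι), b i ∈ W} *
          ∏ i ∈ range k, (q ^ finrank F M - q ^ i) =
        Nat.card {b : ι → M // LinearIndependent F b} * ∏ i ∈ range k, (q ^ k - q ^ i) := by
    intro S hS
    have hSk : Fintype.card (S : Set ι) = k := by simpa using mem_powersetCard_univ.1 hS
    have h := card_linearIndependent_forall_mem_mul (S : Set ι) W
    rwa [card_linearIndependent_of_card_le (hSk ▸ W.finrank_le),
      card_linearIndependent_forall_mem, card_linearIndependent_of_card_le hSk.le, hSk] at h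
  have hq : 1 < q := Fintype.one_lt_card
  have hI : (∏ i ∈ range k, (q ^ k - q ^ i) : ℕ) ≠ 0 := prod_ne_zero_iff.2 fun i hi =>
    Nat.sub_ne_zero_of_lt (Nat.pow_lt_pow_right hq (mem_range.1 hi))
  have hnat : Nat.card {b : ι → M // LinearIndependent F b ∧ W ∈ subfamilySpans F b} *
        ∏ i ∈ range k, (q ^ finrank F M - q ^ i) =
      (Fintype.card ι).choose k * Nat.card {b : ι → M // LinearIndependent F b} *
        ∏ i ∈ range k, (q ^ k - q ^ i) := by
    rw [card_linearIndependent_mem_subfamilySpans, sum_mul, sum_congr rfl hterm, sum_const,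
      card_powersetCard, card_univ, smul_eq_mul, mul_assoc]
  rw [gaussBinom_eq_div (by omega) W.finrank_le, mul_div_assoc',
    div_eq_iff (by exact_mod_cast hI)]
  exact_mod_cast hnat

end LinearAlgebra

theorem uniform_transfer_general
    (F : Type*) [Field F] [Fintype F] (n k : ℕ) (hn : 2 * k ≤ n)
    (c : ℝ)
    (P : Finset (Submodule F (Fin n → F)) → Prop)
    (hered : ∀ A B : Finset (Submodule F (Fin n → F)), A ⊆ B → P B → P A)
    (hbool : ∀ B : Finset (Fin n → F), B.card = n →
      LinearIndependent F (fun x : ↥(B : Set (Fin n → F)) => (x : Fin n → F)) →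
      ∀ A : Finset (Submodule F (Fin n → F)),
        (∀ W ∈ A, Module.finrank F W = k) →
        (∀ W ∈ A, ∃ U ⊆ B, Submodule.span F (U : Set (Fin n → F)) = W) →
        P A → (A.card : ℝ) ≤ c * (n.choose k : ℝ)) :
    ∀ V : Finset (Submodule F (Fin n → F)),
      (∀ W ∈ V, Module.finrank F W = k) → P V →
      (V.card : ℝ) ≤ c * ((gaussBinom (Fintype.card F) n k : ℚ) : ℝ) := by
  classical
  intro V hV hPV
  let bases := univ.filter fun b : Fin n → Fin n → F => LinearIndependent F b
  let r (W : Submodule F (Fin n → F)) (b : Fin n → Fin n → F) : Prop :=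
    W ∈ subfamilySpans F b
  set g : ℝ := ((gaussBinom (Fintype.card F) n k : ℚ) : ℝ)
  have hbound : ∀ b ∈ bases, (#(V.bipartiteBelow r b) : ℝ) ≤ c * n.choose k := by
    intro b hb
    replace hb : LinearIndependent F b := (mem_filter.1 hb).2
    refine hbool (univ.image b) ?_ ?_ _ (fun W hW => hV W (mem_filter.1 hW).1) (fun W hW => ?_)
      (hered _ V (filter_subset _ _) hPV)
    · simpa using card_image_of_injective univ hb.injective
    · rw [coe_image, coe_univ, Set.image_univ]
      exact (linearIndepOn_id_range_iff hb.injective).2 hb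
    · obtain ⟨S, hS⟩ := (mem_filter.1 hW).2
      exact ⟨S.image b, image_subset_image (subset_univ S), by rwa [coe_image]⟩
  have hcount : ∀ W ∈ V, (#(bases.bipartiteAbove r W) : ℝ) * g = n.choose k * #bases := by
    intro W hW
    have h := card_linearIndependent_mem_subfamilySpans_mul_gaussBinom (ι := Fin n) W
    simp only [Nat.card_eq_fintype_card, Fintype.card_subtype, hV W hW, finrank_fin_fun,
      Fintype.card_fin] at h
    simpa [bipartiteAbove, bases, r, filter_filter] using congrArg ((↑) : ℚ → ℝ) h
  have hg : 0 < g := Rat.cast_pos.2 (gaussBinom_pos Fintype.one_lt_card (by omega))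
  have hCB : (0 : ℝ) < n.choose k * #bases := by
    have hB : bases.Nonempty :=
      ⟨_, mem_filter.2 ⟨mem_univ _, (Pi.basisFun F (Fin n)).linearIndependent⟩⟩
    have hC : 0 < n.choose k := Nat.choose_pos (by omega)
    positivity
  have h := card_nsmul_le_card_nsmul (R := ℝ) r (m := n.choose k * #bases / g)
    (fun W hW => (eq_div_of_mul_eq hg.ne' (hcount W hW)).ge) hbound
  rw [nsmul_eq_mul, nsmul_eq_mul, mul_div_assoc', div_le_iff₀ hg] at h
  exact le_of_mul_le_mul_right (by linarith) hCB

/-- Transfer principle for uniform families: if a hereditary property `P` forces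
every family of `k`-dimensional members of a Boolean sublattice `G_B` (`B` a basis
of `F_q^n`) to have size at most `c·C(n,k)`, then every family of `k`-dimensional
subspaces of `F_q^n` with property `P` has size at most `c·[n choose k]_q`. -/
theorem uniform_transfer
    (F : Type*) [Field F] [Fintype F] (n k : ℕ) (hk : 1 ≤ k) (hn : 2 * k ≤ n)
    (c : ℝ) (hc0 : 0 < c) (hc1 : c ≤ 1)
    (P : Finset (Submodule F (Fin n → F)) → Prop)
    (hered : ∀ A B : Finset (Submodule F (Fin n → F)), A ⊆ B → P B → P A)
    (hbool : ∀ B : Finset (Fin n → F), B.card = n →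
      LinearIndependent F (fun x : ↥(B : Set (Fin n → F)) => (x : Fin n → F)) →
      ∀ A : Finset (Submodule F (Fin n → F)),
        (∀ W ∈ A, Module.finrank F W = k) →
        (∀ W ∈ A, ∃ U ⊆ B, Submodule.span F (U : Set (Fin n → F)) = W) →
        P A → (A.card : ℝ) ≤ c * (n.choose k : ℝ)) :
    ∀ V : Finset (Submodule F (Fin n → F)),
      (∀ W ∈ V, Module.finrank F W = k) → P V →
      (V.card : ℝ) ≤ c * ((gaussBinom (Fintype.card F) n k : ℚ) : ℝ) :=
  uniform_transfer_general F n k hn c P hered hbool
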